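/- arXiv:0810.4402 — 4 statements merged into one kernel-verified Lean document; each statement's English description precedes it below -/
import Mathlib

section
/- For all ξ, ζ ∈ A_φ the following identity holds: −(1/2) ∫₀¹ ( B(ξ(t), ζ'(t)) − B(ζ(t), ξ'(t)) ) dt + (1/2) B(φ⁻¹(v_ξ), ζ(0)) − (1/2) B(φ⁻¹(v_ζ), ξ(0)) = ∫₀¹ B(ξ'(t), ζ(t)) dt − B(φ(ξ(0)), v_ζ) − (1/2) B(v_ξ, v_ζ). (The left-hand side is the contraction of ϖ := −Q^κ = −(1/2)∫₀¹ κ_t · κ̇_t − (1/2) a*θ^L · κ₀, where κ_t(ξ) = −ξ(t), with the pair (ξ, ζ); the identity is the paper's explicit formula for ϖ.) -/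
/-!
Integrating `B(ξ, ζ')` by parts turns the antisymmetrized integral on the left into
`∫₀¹ B(ξ', ζ)` plus the boundary term `B(ξ 1, ζ 1) - B(ξ 0, ζ 0)`. Quasi-periodicity
`ξ 1 = φ (ξ 0) + v_ξ` and the `φ`-invariance of `B` reduce that boundary term to
`B(φ (ξ 0), v_ζ) + B(v_ξ, φ (ζ 0)) + B(v_ξ, v_ζ)`, and the same invariance moves `φ⁻¹` across `B`
in the remaining two terms.
-/

/-- The fiber `A_φ` of the Atiyah algebroid: smooth maps `ξ : ℝ → 𝔤` satisfying
`ξ (t+1) = φ (ξ t) + v` for all `t`, for the given constant `v = v_ξ` (the anchor). -/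
def AtiyahFiber {𝔤 : Type*} [NormedAddCommGroup 𝔤] [NormedSpace ℝ 𝔤]
    (φ : 𝔤 → 𝔤) (ξ : ℝ → 𝔤) (v : 𝔤) : Prop :=
  ContDiff ℝ (⊤ : ℕ∞) ξ ∧ ∀ t : ℝ, ξ (t + 1) = φ (ξ t) + v

open intervalIntegral

theorem AtiyahFiber.apply_one {𝔤 : Type*} [NormedAddCommGroup 𝔤] [NormedSpace ℝ 𝔤]
    {φ : 𝔤 → 𝔤} {ξ : ℝ → 𝔤} {v : 𝔤} (hξ : AtiyahFiber φ ξ v) : ξ 1 = φ (ξ 0) + v := by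
  simpa using hξ.2 0

theorem AtiyahFiber.contDiff_one {𝔤 : Type*} [NormedAddCommGroup 𝔤] [NormedSpace ℝ 𝔤]
    {φ : 𝔤 → 𝔤} {ξ : ℝ → 𝔤} {v : 𝔤} (hξ : AtiyahFiber φ ξ v) : ContDiff ℝ 1 ξ :=
  hξ.1.of_le (by exact_mod_cast le_top)

section IntegrationByParts

variable {E F G : Type*} [NormedAddCommGroup E] [NormedSpace ℝ E]
  [NormedAddCommGroup F] [NormedSpace ℝ F] [NormedAddCommGroup G] [NormedSpace ℝ G]

theorem ContinuousLinearMap.intervalIntegrable_apply_apply (L : E →L[ℝ] F →L[ℝ] G)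
    {u : ℝ → E} {v : ℝ → F} (hu : Continuous u) (hv : Continuous v) (a b : ℝ) :
    IntervalIntegrable (fun t ↦ L (u t) (v t)) MeasureTheory.volume a b :=
  ((L.continuous.comp hu).clm_apply hv).intervalIntegrable a b

theorem ContinuousLinearMap.integral_apply_deriv_eq_sub [CompleteSpace G]
    (L : E →L[ℝ] F →L[ℝ] G) {u : ℝ → E} {v : ℝ → F}
    (hu : ContDiff ℝ 1 u) (hv : ContDiff ℝ 1 v) (a b : ℝ) :
    ∫ t in a..b, L (u t) (deriv v t) =
      L (u b) (v b) - L (u a) (v a) - ∫ t in a..b, L (deriv u t) (v t) := by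
  have hu' := hu.continuous_deriv le_rfl
  have hv' := hv.continuous_deriv le_rfl
  have h₁ := L.intervalIntegrable_apply_apply hu.continuous hv' a b
  have h₂ := L.intervalIntegrable_apply_apply hu' hv.continuous a b
  rw [eq_sub_iff_add_eq, ← integral_add h₁ h₂]
  refine integral_eq_sub_of_hasDerivAt (f := fun t ↦ L (u t) (v t)) (fun t _ ↦ ?_) (h₁.add h₂)
  exact L.hasDerivAt_of_bilinear (fun _ ↦ (hu.differentiable one_ne_zero t).hasDerivAt)
    (fun _ ↦ (hv.differentiable one_ne_zero t).hasDerivAt)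

end IntegrationByParts

section InvariantForm

variable {R M : Type*} [CommSemiring R] [AddCommMonoid M] [Module R M]
  (B : M →ₗ[R] M →ₗ[R] R)

theorem LinearMap.apply_symm_apply_eq_apply_apply {φ : M ≃ₗ[R] M}
    (hφB : ∀ x y, B (φ x) (φ y) = B x y) (v y : M) : B (φ.symm v) y = B v (φ y) := by
  simpa using (hφB (φ.symm v) y).symm

theorem LinearMap.apply_add_apply_add_eq {φ : M → M} (hφB : ∀ x y, B (φ x) (φ y) = B x y)
    (x y v w : M) :
    B (φ x + v) (φ y + w) = B x y + B (φ x) w + B v (φ y) + B v w := by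
  simp only [map_add, LinearMap.add_apply, hφB]
  abel

end InvariantForm

theorem varpi_explicit_formula_general
    {𝔤 : Type*} [NormedAddCommGroup 𝔤] [NormedSpace ℝ 𝔤] [FiniteDimensional ℝ 𝔤]
    (B : 𝔤 →ₗ[ℝ] 𝔤 →ₗ[ℝ] ℝ)
    (B_symm : ∀ x y : 𝔤, B x y = B y x)
    (φ : 𝔤 ≃ₗ[ℝ] 𝔤)
    (hφB : ∀ x y : 𝔤, B (φ x) (φ y) = B x y)
    (ξ ζ : ℝ → 𝔤) (vξ vζ : 𝔤)
    (hξ : AtiyahFiber ⇑φ ξ vξ) (hζ : AtiyahFiber ⇑φ ζ vζ) :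
    -(1/2 : ℝ) * (∫ t in (0:ℝ)..1, (B (ξ t) (deriv ζ t) - B (ζ t) (deriv ξ t)))
        + (1/2 : ℝ) * B (φ.symm vξ) (ζ 0) - (1/2 : ℝ) * B (φ.symm vζ) (ξ 0)
      = (∫ t in (0:ℝ)..1, B (deriv ξ t) (ζ t))
        - B (φ (ξ 0)) vζ - (1/2 : ℝ) * B vξ vζ := by
  set Bc := B.toContinuousBilinearMap
  have hξ₁ := hξ.contDiff_one
  have hζ₁ := hζ.contDiff_one
  have h_split : ∫ t in (0:ℝ)..1, (B (ξ t) (deriv ζ t) - B (ζ t) (deriv ξ t)) =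
      (∫ t in (0:ℝ)..1, Bc (ξ t) (deriv ζ t)) - ∫ t in (0:ℝ)..1, Bc (deriv ξ t) (ζ t) := by
    simp_rw [B_symm (ζ _)]
    exact integral_sub (Bc.intervalIntegrable_apply_apply hξ₁.continuous
      (hζ₁.continuous_deriv le_rfl) 0 1) (Bc.intervalIntegrable_apply_apply
      (hξ₁.continuous_deriv le_rfl) hζ₁.continuous 0 1)
  have h_parts := Bc.integral_apply_deriv_eq_sub hξ₁ hζ₁ 0 1
  have h_boundary := B.apply_add_apply_add_eq hφB (ξ 0) (ζ 0) vξ vζ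
  rw [← hξ.apply_one, ← hζ.apply_one] at h_boundary
  rw [h_split, h_parts, B.apply_symm_apply_eq_apply_apply hφB,
    B.apply_symm_apply_eq_apply_apply hφB, B_symm vζ]
  simp only [Bc, LinearMap.toContinuousBilinearMap_apply] at h_boundary ⊢
  linarith

/-- For `ξ, ζ ∈ A_φ`:
`-(1/2)∫₀¹ (B(ξ, ζ') - B(ζ, ξ')) + (1/2)B(φ⁻¹ vξ, ζ 0) - (1/2)B(φ⁻¹ vζ, ξ 0)`
`= ∫₀¹ B(ξ', ζ) - B(φ (ξ 0), vζ) - (1/2) B(vξ, vζ)`.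
(The left side is the contraction of `ϖ = -Q^κ` with `(ξ, ζ)`.) -/
theorem varpi_explicit_formula
    {𝔤 : Type*} [NormedAddCommGroup 𝔤] [NormedSpace ℝ 𝔤] [FiniteDimensional ℝ 𝔤]
    (br : 𝔤 →ₗ[ℝ] 𝔤 →ₗ[ℝ] 𝔤)
    (br_alt : ∀ x : 𝔤, br x x = 0)
    (br_jacobi : ∀ x y z : 𝔤, br (br x y) z + br (br y z) x + br (br z x) y = 0)
    (B : 𝔤 →ₗ[ℝ] 𝔤 →ₗ[ℝ] ℝ)
    (B_symm : ∀ x y : 𝔤, B x y = B y x)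
    (B_inv : ∀ x y z : 𝔤, B (br x y) z = B x (br y z))
    (φ : 𝔤 ≃ₗ[ℝ] 𝔤)
    (hφbr : ∀ x y : 𝔤, φ (br x y) = br (φ x) (φ y))
    (hφB : ∀ x y : 𝔤, B (φ x) (φ y) = B x y)
    (ξ ζ : ℝ → 𝔤) (vξ vζ : 𝔤)
    (hξ : AtiyahFiber ⇑φ ξ vξ) (hζ : AtiyahFiber ⇑φ ζ vζ) :
    -(1/2 : ℝ) * (∫ t in (0:ℝ)..1, (B (ξ t) (deriv ζ t) - B (ζ t) (deriv ξ t)))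
        + (1/2 : ℝ) * B (φ.symm vξ) (ζ 0) - (1/2 : ℝ) * B (φ.symm vζ) (ξ 0)
      = (∫ t in (0:ℝ)..1, B (deriv ξ t) (ζ t))
        - B (φ (ξ 0)) vζ - (1/2 : ℝ) * B vξ vζ :=
  varpi_explicit_formula_general B B_symm φ hφB ξ ζ vξ vζ hξ hζ
end

section
/- The bilinear form ϖ_φ on A_φ defined by ϖ_φ(ξ, ζ) := ∫₀¹ B(ξ'(t), ζ(t)) dt − B(φ(ξ(0)), v_ζ) − (1/2) B(v_ξ, v_ζ) is antisymmetric: ϖ_φ(ξ, ζ) = −ϖ_φ(ζ, ξ) for all ξ, ζ ∈ A_φ; in particular it defines an alternating 2-form on the fiber A_φ. -/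
/-- The 2-form `ϖ_φ` on the fiber `A_φ`:
`ϖ_φ(ξ,ζ) = ∫₀¹ B(ξ'(t), ζ(t)) dt - B(φ(ξ 0), v_ζ) - (1/2) B(v_ξ, v_ζ)`. -/
noncomputable def varpi {𝔤 : Type*} [NormedAddCommGroup 𝔤] [NormedSpace ℝ 𝔤]
    (B : 𝔤 →ₗ[ℝ] 𝔤 →ₗ[ℝ] ℝ) (φ : 𝔤 → 𝔤) (ξ ζ : ℝ → 𝔤) (vξ vζ : 𝔤) : ℝ :=
  (∫ t in (0:ℝ)..1, B (deriv ξ t) (ζ t)) - B (φ (ξ 0)) vζ - (1/2 : ℝ) * B vξ vζ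

/-! Differentiating `t ↦ B (ξ t) (ζ t)` and integrating over `[0, 1]` shows that, by symmetry of `B`,
the two integrals in `ϖ_φ(ξ, ζ) + ϖ_φ(ζ, ξ)` add up to `B (ξ 1) (ζ 1) - B (ξ 0) (ζ 0)`. Inserting
`ξ 1 = φ (ξ 0) + v_ξ`, `ζ 1 = φ (ζ 0) + v_ζ` and the `φ`-invariance of `B`, this is exactly
`B (φ (ξ 0)) v_ζ + B (φ (ζ 0)) v_ξ + B v_ξ v_ζ`, the sum of the boundary terms. -/

open intervalIntegral

theorem ContinuousLinearMap.integral_bilinear_deriv_add_integral_bilinear_deriv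
    {E F G : Type*} [NormedAddCommGroup E] [NormedSpace ℝ E] [NormedAddCommGroup F]
    [NormedSpace ℝ F] [NormedAddCommGroup G] [NormedSpace ℝ G] [CompleteSpace G]
    (B : E →L[ℝ] F →L[ℝ] G) {f : ℝ → E} {g : ℝ → F} (hf : ContDiff ℝ 1 f) (hg : ContDiff ℝ 1 g)
    (a b : ℝ) :
    (∫ t in a..b, B (deriv f t) (g t)) + ∫ t in a..b, B (f t) (deriv g t) =
      B (f b) (g b) - B (f a) (g a) := by
  have hderiv : ∀ t, HasDerivAt (fun s ↦ B (f s) (g s))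
      (B (deriv f t) (g t) + B (f t) (deriv g t)) t := fun t ↦ by
    rw [add_comm]
    exact B.hasDerivAt_of_bilinear (fun _ ↦ (hf.differentiable one_ne_zero t).hasDerivAt)
      (fun _ ↦ (hg.differentiable one_ne_zero t).hasDerivAt)
  have hint₁ : IntervalIntegrable (fun t ↦ B (deriv f t) (g t)) MeasureTheory.volume a b :=
    (B.continuous₂.comp₂ (hf.continuous_deriv le_rfl) hg.continuous).intervalIntegrable a b
  have hint₂ : IntervalIntegrable (fun t ↦ B (f t) (deriv g t)) MeasureTheory.volume a b :=
    (B.continuous₂.comp₂ hf.continuous (hg.continuous_deriv le_rfl)).intervalIntegrable a b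
  rw [← integral_add hint₁ hint₂]
  exact integral_eq_sub_of_hasDerivAt (fun t _ ↦ hderiv t) (hint₁.add hint₂)

theorem LinearMap.integral_deriv_add_integral_deriv_of_symm
    {E : Type*} [NormedAddCommGroup E] [NormedSpace ℝ E] [FiniteDimensional ℝ E]
    {B : E →ₗ[ℝ] E →ₗ[ℝ] ℝ} (hB : ∀ x y, B x y = B y x) {f g : ℝ → E}
    (hf : ContDiff ℝ 1 f) (hg : ContDiff ℝ 1 g) (a b : ℝ) :
    (∫ t in a..b, B (deriv f t) (g t)) + ∫ t in a..b, B (deriv g t) (f t) =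
      B (f b) (g b) - B (f a) (g a) := by
  simpa only [LinearMap.toContinuousBilinearMap_apply, hB (deriv g _)] using
    B.toContinuousBilinearMap.integral_bilinear_deriv_add_integral_bilinear_deriv hf hg a b

theorem LinearMap.apply_add_apply_add_sub_of_preserves
    {R M : Type*} [CommRing R] [AddCommGroup M] [Module R M] {B : M →ₗ[R] M →ₗ[R] R}
    (hB : ∀ x y, B x y = B y x) {φ : M → M} (hφB : ∀ x y, B (φ x) (φ y) = B x y)
    (x y v w : M) :
    B (φ x + v) (φ y + w) - B x y = B (φ x) w + B (φ y) v + B v w := by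
  simp only [map_add, LinearMap.add_apply, hφB, hB v (φ y)]
  ring

namespace AtiyahFiber

variable {𝔤 : Type*} [NormedAddCommGroup 𝔤] [NormedSpace ℝ 𝔤] {φ : 𝔤 → 𝔤} {ξ : ℝ → 𝔤} {v : 𝔤}

theorem contDiff_one_s7 (h : AtiyahFiber φ ξ v) : ContDiff ℝ 1 ξ :=
  h.1.of_le (by exact_mod_cast le_top)

theorem apply_one_s7 (h : AtiyahFiber φ ξ v) : ξ 1 = φ (ξ 0) + v := by
  simpa using h.2 0

end AtiyahFiber

theorem varpi_antisymm_general
    {𝔤 : Type*} [NormedAddCommGroup 𝔤] [NormedSpace ℝ 𝔤] [FiniteDimensional ℝ 𝔤]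
    (B : 𝔤 →ₗ[ℝ] 𝔤 →ₗ[ℝ] ℝ)
    (B_symm : ∀ x y : 𝔤, B x y = B y x)
    (φ : 𝔤 ≃ₗ[ℝ] 𝔤)
    (hφB : ∀ x y : 𝔤, B (φ x) (φ y) = B x y)
    (ξ ζ : ℝ → 𝔤) (vξ vζ : 𝔤)
    (hξ : AtiyahFiber ⇑φ ξ vξ) (hζ : AtiyahFiber ⇑φ ζ vζ) :
    varpi B ⇑φ ξ ζ vξ vζ = - varpi B ⇑φ ζ ξ vζ vξ := by
  have parts := LinearMap.integral_deriv_add_integral_deriv_of_symm B_symm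
    hξ.contDiff_one_s7 hζ.contDiff_one_s7 0 1
  rw [hξ.apply_one_s7, hζ.apply_one_s7,
    LinearMap.apply_add_apply_add_sub_of_preserves B_symm hφB] at parts
  rw [varpi, varpi, B_symm vζ vξ]
  linarith

/-- The bilinear form `ϖ_φ` on `A_φ` is antisymmetric:
`ϖ_φ(ξ, ζ) = -ϖ_φ(ζ, ξ)` for all `ξ, ζ ∈ A_φ`. -/
theorem varpi_antisymm
    {𝔤 : Type*} [NormedAddCommGroup 𝔤] [NormedSpace ℝ 𝔤] [FiniteDimensional ℝ 𝔤]
    (br : 𝔤 →ₗ[ℝ] 𝔤 →ₗ[ℝ] 𝔤)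
    (br_alt : ∀ x : 𝔤, br x x = 0)
    (br_jacobi : ∀ x y z : 𝔤, br (br x y) z + br (br y z) x + br (br z x) y = 0)
    (B : 𝔤 →ₗ[ℝ] 𝔤 →ₗ[ℝ] ℝ)
    (B_symm : ∀ x y : 𝔤, B x y = B y x)
    (B_inv : ∀ x y z : 𝔤, B (br x y) z = B x (br y z))
    (φ : 𝔤 ≃ₗ[ℝ] 𝔤)
    (hφbr : ∀ x y : 𝔤, φ (br x y) = br (φ x) (φ y))
    (hφB : ∀ x y : 𝔤, B (φ x) (φ y) = B x y)
    (ξ ζ : ℝ → 𝔤) (vξ vζ : 𝔤)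
    (hξ : AtiyahFiber ⇑φ ξ vξ) (hζ : AtiyahFiber ⇑φ ζ vζ) :
    varpi B ⇑φ ξ ζ vξ vζ = - varpi B ⇑φ ζ ξ vζ vξ :=
  varpi_antisymm_general B B_symm φ hφB ξ ζ vξ vζ hξ hζ
end

section
/- Let φ', φ'' be Lie algebra automorphisms of 𝔤, and let ξ' ∈ A_{φ'} and ξ'' ∈ A_{φ''} satisfy ξ'(1) = ξ''(0), and suppose there is ε > 0 such that ξ' and ξ'' are each constant on the interval (−ε, ε). Then there exists a unique smooth map μ : ℝ → 𝔤 (the concatenation ξ'' * ξ') such that μ(t) = ξ'(2t) for t ∈ [0, 1/2], μ(t) = ξ''(2t − 1) for t ∈ [1/2, 1], and μ(t+1) = φ''(φ'(μ(t))) + φ''(v_{ξ'}) + v_{ξ''} for all t ∈ ℝ. In particular μ ∈ A_{φ''∘φ'} with v_μ = φ''(v_{ξ'}) + v_{ξ''}. -/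
open Filter Topology Set

theorem Equiv.Perm.contDiff_zpow {𝕜 E : Type*} [NontriviallyNormedField 𝕜]
    [NormedAddCommGroup E] [NormedSpace 𝕜 E] {n : WithTop ℕ∞} {T : Equiv.Perm E}
    (hT : ContDiff 𝕜 n T) (hT_symm : ContDiff 𝕜 n T.symm) (m : ℤ) : ContDiff 𝕜 n ⇑(T ^ m) := by
  induction m using Int.induction_on with
  | zero => simpa only [zpow_zero, Equiv.Perm.coe_one] using contDiff_id
  | succ k ih => simpa only [zpow_add_one, Equiv.Perm.coe_mul] using ih.comp hT
  | pred k ih =>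
    simpa only [zpow_sub_one, Equiv.Perm.coe_mul, Equiv.Perm.coe_inv] using ih.comp hT_symm

section PathConcatenation

variable {E : Type*}

def IsTwistedPeriodic (T : Equiv.Perm E) (f : ℝ → E) : Prop :=
  ∀ t, f (t + 1) = T (f t)

namespace IsTwistedPeriodic

variable {T : Equiv.Perm E} {f g : ℝ → E}

theorem apply_add_intCast (hf : IsTwistedPeriodic T f) (t : ℝ) (m : ℤ) :
    f (t + m) = (T ^ m) (f t) := by
  induction m using Int.induction_on with
  | zero => simp
  | succ k ih =>
    rw [add_comm (k : ℤ) 1, zpow_one_add, Equiv.Perm.mul_apply, ← ih, ← hf]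
    push_cast; ring_nf
  | pred k ih =>
    apply T.injective
    rw [← hf, ← Equiv.Perm.mul_apply, ← zpow_one_add, show 1 + (-k - 1 : ℤ) = -k by ring, ← ih]
    push_cast; ring_nf

theorem apply_eq_zpow_floor_apply_fract (hf : IsTwistedPeriodic T f) (t : ℝ) :
    f t = (T ^ ⌊t⌋) (f (Int.fract t)) := by
  rw [← hf.apply_add_intCast, Int.fract_add_floor]

theorem eq_of_eqOn_Ico (hf : IsTwistedPeriodic T f) (hg : IsTwistedPeriodic T g)
    (hfg : EqOn f g (Ico 0 1)) : f = g := by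
  funext t
  rw [hf.apply_eq_zpow_floor_apply_fract, hg.apply_eq_zpow_floor_apply_fract,
    hfg ⟨Int.fract_nonneg t, Int.fract_lt_one t⟩]

theorem contDiff [NormedAddCommGroup E] [NormedSpace ℝ E] {n : WithTop ℕ∞}
    (hf : IsTwistedPeriodic T f) (hT : ContDiff ℝ n T) (hT_symm : ContDiff ℝ n T.symm)
    (hf_Ico : ∀ t ∈ Ico (0 : ℝ) 1, ContDiffAt ℝ n f t) : ContDiff ℝ n f := by
  rw [contDiff_iff_contDiffAt]
  intro t
  have hshift : f = fun s => (T ^ ⌊t⌋) (f (s - ⌊t⌋)) := by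
    funext s
    rw [← hf.apply_add_intCast, sub_add_cancel]
  have hfract : ContDiffAt ℝ n f (t - ⌊t⌋) :=
    hf_Ico _ ⟨Int.fract_nonneg t, Int.fract_lt_one t⟩
  rw [hshift]
  exact (Equiv.Perm.contDiff_zpow hT hT_symm _).contDiffAt.comp t
    (hfract.comp t (contDiffAt_id.sub contDiffAt_const))

end IsTwistedPeriodic

noncomputable def twistedPeriodicExtension (T : Equiv.Perm E) (b : ℝ → E) (t : ℝ) : E :=
  (T ^ ⌊t⌋) (b (Int.fract t))

section TwistedPeriodicExtension

variable {T : Equiv.Perm E} {b : ℝ → E}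

theorem isTwistedPeriodic_twistedPeriodicExtension :
    IsTwistedPeriodic T (twistedPeriodicExtension T b) := by
  intro t
  simp only [twistedPeriodicExtension, Int.floor_add_one, Int.fract_add_one, add_comm _ (1 : ℤ),
    zpow_one_add, Equiv.Perm.mul_apply]

theorem twistedPeriodicExtension_eqOn_Ico : EqOn (twistedPeriodicExtension T b) b (Ico 0 1) := by
  intro t ht
  simp [twistedPeriodicExtension, Int.floor_eq_zero_iff.mpr ht, Int.fract_eq_self.mpr ht]

theorem twistedPeriodicExtension_eventuallyEq (hb : ∀ᶠ s in 𝓝 0, b (s + 1) = T (b s)) :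
    twistedPeriodicExtension T b =ᶠ[𝓝 0] b := by
  filter_upwards [hb, Ioo_mem_nhds (show (-1 : ℝ) < 0 by norm_num) one_pos] with s hs hs_mem
  rcases le_or_gt 0 s with hs0 | hs0
  · exact twistedPeriodicExtension_eqOn_Ico ⟨hs0, hs_mem.2⟩
  · apply T.injective
    rw [← hs, ← isTwistedPeriodic_twistedPeriodicExtension s]
    exact twistedPeriodicExtension_eqOn_Ico ⟨by linarith [hs_mem.1], by linarith⟩

theorem twistedPeriodicExtension_eqOn_Icc (hb : ∀ᶠ s in 𝓝 0, b (s + 1) = T (b s)) :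
    EqOn (twistedPeriodicExtension T b) b (Icc 0 1) := by
  intro t ht
  rcases ht.2.lt_or_eq with ht1 | rfl
  · exact twistedPeriodicExtension_eqOn_Ico ⟨ht.1, ht1⟩
  · rw [← zero_add 1, isTwistedPeriodic_twistedPeriodicExtension, hb.self_of_nhds,
      twistedPeriodicExtension_eqOn_Ico ⟨le_rfl, one_pos⟩]

theorem contDiff_twistedPeriodicExtension [NormedAddCommGroup E] [NormedSpace ℝ E]
    {n : WithTop ℕ∞} (hT : ContDiff ℝ n T) (hT_symm : ContDiff ℝ n T.symm)
    (hb_smooth : ContDiff ℝ n b) (hb : ∀ᶠ s in 𝓝 0, b (s + 1) = T (b s)) :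
    ContDiff ℝ n (twistedPeriodicExtension T b) := by
  refine isTwistedPeriodic_twistedPeriodicExtension.contDiff hT hT_symm fun t ht => ?_
  refine hb_smooth.contDiffAt.congr_of_eventuallyEq ?_
  rcases ht.1.eq_or_lt with rfl | ht0
  · exact twistedPeriodicExtension_eventuallyEq hb
  · exact eventuallyEq_of_mem (Ioo_mem_nhds ht0 ht.2)
      fun s hs => twistedPeriodicExtension_eqOn_Ico (Ioo_subset_Ico_self hs)

end TwistedPeriodicExtension

theorem eventually_eq_apply_add_one {F : E → E} {ξ : ℝ → E} (hξ : ∀ t, ξ (t + 1) = F (ξ t))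
    {a : ℝ} (ha : ∀ᶠ t in 𝓝 a, ξ t = ξ a) : ∀ᶠ t in 𝓝 (a + 1), ξ t = ξ (a + 1) := by
  have hshift : Tendsto (fun t => t - 1) (𝓝 (a + 1)) (𝓝 a) :=
    (continuous_sub_right 1).tendsto' _ _ (add_sub_cancel_right a 1)
  filter_upwards [hshift.eventually ha] with t ht
  rw [← sub_add_cancel t 1, hξ, ht, hξ]

theorem contDiff_ite_le_of_eventuallyEq [NormedAddCommGroup E] [NormedSpace ℝ E]
    {n : WithTop ℕ∞} {f₁ f₂ : ℝ → E} {x : ℝ} (h₁ : ContDiff ℝ n f₁) (h₂ : ContDiff ℝ n f₂)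
    (h : f₁ =ᶠ[𝓝 x] f₂) : ContDiff ℝ n fun s => if s ≤ x then f₁ s else f₂ s := by
  rw [contDiff_iff_contDiffAt]
  intro t
  rcases lt_trichotomy t x with htx | rfl | htx
  · refine h₁.contDiffAt.congr_of_eventuallyEq ?_
    filter_upwards [Iio_mem_nhds htx] with s hs
    rw [if_pos hs.le]
  · refine h₁.contDiffAt.congr_of_eventuallyEq ?_
    filter_upwards [h] with s hs
    split_ifs
    exacts [rfl, hs.symm]
  · refine h₂.contDiffAt.congr_of_eventuallyEq ?_
    filter_upwards [Ioi_mem_nhds htx] with s hs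
    rw [if_neg (not_le.mpr hs)]

noncomputable def concatPath (ξ' ξ'' : ℝ → E) (s : ℝ) : E :=
  if s ≤ 1 / 2 then ξ' (2 * s) else ξ'' (2 * s - 1)

section ConcatPath

variable {ξ' ξ'' ν : ℝ → E}

theorem eqOn_concatPath_iff (hmatch : ξ' 1 = ξ'' 0) :
    EqOn ν (concatPath ξ' ξ'') (Icc 0 1) ↔
      (∀ t ∈ Icc (0 : ℝ) (1 / 2), ν t = ξ' (2 * t)) ∧
        ∀ t ∈ Icc (1 / 2 : ℝ) 1, ν t = ξ'' (2 * t - 1) := by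
  have h_half : ξ' (2 * (1 / 2)) = ξ'' (2 * (1 / 2) - 1) := by norm_num [hmatch]
  constructor
  · intro h
    refine ⟨fun t ht => ?_, fun t ht => ?_⟩
    · rw [h ⟨ht.1, ht.2.trans (by norm_num)⟩, concatPath, if_pos ht.2]
    · rw [h ⟨(by norm_num : (0 : ℝ) ≤ 1 / 2).trans ht.1, ht.2⟩, concatPath]
      split_ifs with ht'
      · rw [le_antisymm ht' ht.1, h_half]
      · rfl
  · rintro ⟨h₁, h₂⟩ t ht
    rw [concatPath]
    split_ifs with ht'
    · exact h₁ t ⟨ht.1, ht'⟩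
    · exact h₂ t ⟨(not_le.mp ht').le, ht.2⟩

theorem concatPath_add_one_eventuallyEq {T : E → E} (h'₀ : ∀ᶠ t in 𝓝 0, ξ' t = ξ' 0)
    (h''₁ : ∀ᶠ t in 𝓝 1, ξ'' t = ξ'' 1) (hT : T (ξ' 0) = ξ'' 1) :
    ∀ᶠ s in 𝓝 0, concatPath ξ' ξ'' (s + 1) = T (concatPath ξ' ξ'' s) := by
  have hlim' : Tendsto (fun s : ℝ => 2 * s) (𝓝 0) (𝓝 0) :=
    (by fun_prop : Continuous fun s : ℝ => 2 * s).tendsto' _ _ (by norm_num)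
  have hlim'' : Tendsto (fun s : ℝ => 2 * (s + 1) - 1) (𝓝 0) (𝓝 1) :=
    (by fun_prop : Continuous fun s : ℝ => 2 * (s + 1) - 1).tendsto' _ _ (by norm_num)
  filter_upwards [hlim'.eventually h'₀, hlim''.eventually h''₁,
    Ioo_mem_nhds (by norm_num : (-1 / 2 : ℝ) < 0) (by norm_num : (0 : ℝ) < 1 / 2)]
    with s hs' hs'' hs
  rw [concatPath, concatPath, if_neg (by linarith [hs.1]), if_pos hs.2.le, hs', hs'', hT]

theorem contDiff_concatPath [NormedAddCommGroup E] [NormedSpace ℝ E] {n : WithTop ℕ∞}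
    (h' : ContDiff ℝ n ξ') (h'' : ContDiff ℝ n ξ'') (h'₁ : ∀ᶠ t in 𝓝 1, ξ' t = ξ' 1)
    (h''₀ : ∀ᶠ t in 𝓝 0, ξ'' t = ξ'' 0) (hmatch : ξ' 1 = ξ'' 0) :
    ContDiff ℝ n (concatPath ξ' ξ'') := by
  refine contDiff_ite_le_of_eventuallyEq (h'.comp (contDiff_const.mul contDiff_id))
    (h''.comp ((contDiff_const.mul contDiff_id).sub contDiff_const)) ?_
  have hlim' : Tendsto (fun s : ℝ => 2 * s) (𝓝 (1 / 2)) (𝓝 1) :=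
    (by fun_prop : Continuous fun s : ℝ => 2 * s).tendsto' _ _ (by norm_num)
  have hlim'' : Tendsto (fun s : ℝ => 2 * s - 1) (𝓝 (1 / 2)) (𝓝 0) :=
    (by fun_prop : Continuous fun s : ℝ => 2 * s - 1).tendsto' _ _ (by norm_num)
  filter_upwards [hlim'.eventually h'₁, hlim''.eventually h''₀] with s hs' hs''
  simp only [hs', hs'', hmatch]

end ConcatPath

end PathConcatenation

theorem concatenation_exists_unique_general
    {𝔤 : Type*} [NormedAddCommGroup 𝔤] [NormedSpace ℝ 𝔤] [FiniteDimensional ℝ 𝔤]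
    (φ' φ'' : 𝔤 ≃ₗ[ℝ] 𝔤)
    (ξ' ξ'' : ℝ → 𝔤) (v' v'' : 𝔤)
    (hξ' : AtiyahFiber ⇑φ' ξ' v') (hξ'' : AtiyahFiber ⇑φ'' ξ'' v'')
    (hmatch : ξ' 1 = ξ'' 0)
    (ε : ℝ) (hε : 0 < ε)
    (hconst' : ∀ t ∈ Set.Ioo (-ε) ε, ξ' t = ξ' 0)
    (hconst'' : ∀ t ∈ Set.Ioo (-ε) ε, ξ'' t = ξ'' 0) :
    ∃! μ : ℝ → 𝔤,
      ContDiff ℝ (⊤ : ℕ∞) μ ∧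
      (∀ t ∈ Set.Icc (0 : ℝ) (1/2), μ t = ξ' (2 * t)) ∧
      (∀ t ∈ Set.Icc (1/2 : ℝ) 1, μ t = ξ'' (2 * t - 1)) ∧
      (∀ t : ℝ, μ (t + 1) = φ'' (φ' (μ t)) + (φ'' v' + v'')) := by
  set e := φ'.trans φ''
  set T : Equiv.Perm 𝔤 := e.toEquiv.trans (Equiv.addRight (φ'' v' + v''))
  have hT : ContDiff ℝ (⊤ : ℕ∞) T := e.toContinuousLinearEquiv.contDiff.add contDiff_const
  have hT_symm : ContDiff ℝ (⊤ : ℕ∞) T.symm :=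
    e.symm.toContinuousLinearEquiv.contDiff.comp (contDiff_id.add contDiff_const)
  have h'₀ : ∀ᶠ t in 𝓝 0, ξ' t = ξ' 0 :=
    eventually_of_mem (Ioo_mem_nhds (neg_lt_zero.2 hε) hε) hconst'
  have h''₀ : ∀ᶠ t in 𝓝 0, ξ'' t = ξ'' 0 :=
    eventually_of_mem (Ioo_mem_nhds (neg_lt_zero.2 hε) hε) hconst''
  have h'₁ : ∀ᶠ t in 𝓝 1, ξ' t = ξ' 1 := by
    simpa only [zero_add] using eventually_eq_apply_add_one (F := fun x => φ' x + v') hξ'.2 h'₀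
  have h''₁ : ∀ᶠ t in 𝓝 1, ξ'' t = ξ'' 1 := by
    simpa only [zero_add] using eventually_eq_apply_add_one (F := fun x => φ'' x + v'') hξ''.2 h''₀
  have hT_junction : T (ξ' 0) = ξ'' 1 := by
    rw [← zero_add (1 : ℝ), hξ''.2, ← hmatch, ← zero_add (1 : ℝ), hξ'.2, map_add, add_assoc]
    rfl
  have hstep := concatPath_add_one_eventuallyEq h'₀ h''₁ hT_junction
  have hμ_Icc := twistedPeriodicExtension_eqOn_Icc hstep
  obtain ⟨hμ₁, hμ₂⟩ := (eqOn_concatPath_iff hmatch).1 hμ_Icc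
  have hμ_smooth := contDiff_twistedPeriodicExtension hT hT_symm
    (contDiff_concatPath hξ'.1 hξ''.1 h'₁ h''₀ hmatch) hstep
  refine ⟨_, ⟨hμ_smooth, hμ₁, hμ₂, isTwistedPeriodic_twistedPeriodicExtension⟩, ?_⟩
  rintro ν ⟨-, hν₁, hν₂, hν⟩
  refine IsTwistedPeriodic.eq_of_eqOn_Ico (T := T) hν isTwistedPeriodic_twistedPeriodicExtension ?_
  exact (((eqOn_concatPath_iff hmatch).2 ⟨hν₁, hν₂⟩).trans hμ_Icc.symm).mono Ico_subset_Icc_self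

/-- Existence and uniqueness of the concatenation `ξ'' * ξ'` of
composable elements `ξ' ∈ A_{φ'}`, `ξ'' ∈ A_{φ''}` (with `ξ' 1 = ξ'' 0`, both
constant near `0`): a smooth `μ` with `μ t = ξ' (2t)` on `[0, 1/2]`,
`μ t = ξ'' (2t-1)` on `[1/2, 1]`, and `μ (t+1) = φ''(φ'(μ t)) + (φ''(v_{ξ'}) + v_{ξ''})`.
In particular `μ ∈ A_{φ''∘φ'}` with anchor `φ''(v_{ξ'}) + v_{ξ''}`. -/
theorem concatenation_exists_unique
    {𝔤 : Type*} [NormedAddCommGroup 𝔤] [NormedSpace ℝ 𝔤] [FiniteDimensional ℝ 𝔤]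
    (br : 𝔤 →ₗ[ℝ] 𝔤 →ₗ[ℝ] 𝔤)
    (br_alt : ∀ x : 𝔤, br x x = 0)
    (br_jacobi : ∀ x y z : 𝔤, br (br x y) z + br (br y z) x + br (br z x) y = 0)
    (φ' φ'' : 𝔤 ≃ₗ[ℝ] 𝔤)
    (hφ' : ∀ x y : 𝔤, φ' (br x y) = br (φ' x) (φ' y))
    (hφ'' : ∀ x y : 𝔤, φ'' (br x y) = br (φ'' x) (φ'' y))
    (ξ' ξ'' : ℝ → 𝔤) (v' v'' : 𝔤)
    (hξ' : AtiyahFiber ⇑φ' ξ' v') (hξ'' : AtiyahFiber ⇑φ'' ξ'' v'')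
    (hmatch : ξ' 1 = ξ'' 0)
    (ε : ℝ) (hε : 0 < ε)
    (hconst' : ∀ t ∈ Set.Ioo (-ε) ε, ξ' t = ξ' 0)
    (hconst'' : ∀ t ∈ Set.Ioo (-ε) ε, ξ'' t = ξ'' 0) :
    ∃! μ : ℝ → 𝔤,
      ContDiff ℝ (⊤ : ℕ∞) μ ∧
      (∀ t ∈ Set.Icc (0 : ℝ) (1/2), μ t = ξ' (2 * t)) ∧
      (∀ t ∈ Set.Icc (1/2 : ℝ) 1, μ t = ξ'' (2 * t - 1)) ∧
      (∀ t : ℝ, μ (t + 1) = φ'' (φ' (μ t)) + (φ'' v' + v'')) :=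
  concatenation_exists_unique_general φ' φ'' ξ' ξ'' v' v'' hξ' hξ'' hmatch ε hε hconst' hconst''
end

section
/- Let φ', φ'' be Lie algebra automorphisms of 𝔤 preserving B, let ξ', ζ' ∈ A_{φ'} and ξ'', ζ'' ∈ A_{φ''} satisfy ξ'(1) = ξ''(0) and ζ'(1) = ζ''(0), and let μ_ξ, μ_ζ : ℝ → 𝔤 be smooth maps with μ_ξ(t) = ξ'(2t) and μ_ζ(t) = ζ'(2t) for t ∈ [0, 1/2], μ_ξ(t) = ξ''(2t−1) and μ_ζ(t) = ζ''(2t−1) for t ∈ [1/2, 1], and μ_ξ(t+1) = φ''(φ'(μ_ξ(t))) + φ''(v_{ξ'}) + v_{ξ''}, μ_ζ(t+1) = φ''(φ'(μ_ζ(t))) + φ''(v_{ζ'}) + v_{ζ''} for all t (i.e. μ_ξ = ξ''*ξ' and μ_ζ = ζ''*ζ' are the concatenations). Then ϖ_{φ''∘φ'}(μ_ξ, μ_ζ) = ϖ_{φ''}(ξ'', ζ'') + ϖ_{φ'}(ξ', ζ') + (1/2)( B(φ''(v_{ξ'}), v_{ζ''}) − B(φ''(v_{ζ'}), v_{ξ''})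 ). (This is the fiberwise form of the paper's fusion property mult_A^! ϖ = pr₁^! ϖ + pr₂^! ϖ − λ, where λ = (1/2) pr₁*θ^L · pr₂*θ^R ∈ Ω²(G×G).) -/
/-!
The integral term of `ϖ` is additive under concatenation: on each half of `[0, 1]` the
concatenated paths are affine reparametrizations `t ↦ ξ (2t + d)` of the two factors, and
`∫ B(ξ', ζ)` is invariant under such a change of variables (the factor `2` from the chain rule
cancels against the Jacobian). What remains is bookkeeping of the boundary terms: with
`μ_ξ(0) = ξ'(0)` and `ξ''(0) = φ'(ξ'(0)) + v_{ξ'}`, the `φ''`-invariance and symmetry of `B`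
leave exactly the cross terms `½ (B(φ'' v_{ξ'}, v_{ζ''}) - B(φ'' v_{ζ'}, v_{ξ''}))`.
-/

open Set MeasureTheory

section Concatenation

variable {E F : Type*} [NormedAddCommGroup E] [NormedSpace ℝ E]
  [NormedAddCommGroup F] [NormedSpace ℝ F]

theorem deriv_eq_smul_deriv_of_eqOn_comp_affine {ξ μ : ℝ → E} {a b c d t : ℝ}
    (hξ : DifferentiableAt ℝ ξ (c * t + d))
    (hμ : EqOn μ (fun s => ξ (c * s + d)) (Icc a b)) (ht : t ∈ Ioo a b) :
    deriv μ t = c • deriv ξ (c * t + d) := by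
  have hμ_nhds : μ =ᶠ[nhds t] fun s => ξ (c * s + d) :=
    Filter.eventually_of_mem (Ioo_mem_nhds ht.1 ht.2) fun s hs => hμ (Ioo_subset_Icc_self hs)
  have haffine : HasDerivAt (fun s : ℝ => c * s + d) c t := by
    simpa using ((hasDerivAt_id t).const_mul c).add_const d
  rw [hμ_nhds.deriv_eq]
  exact (hξ.hasDerivAt.scomp t haffine).deriv

theorem integral_deriv_comp_affine (B : E →ₗ[ℝ] F →ₗ[ℝ] ℝ) {ξ μ : ℝ → E} {ζ ν : ℝ → F}
    {a b c d : ℝ} (hab : a ≤ b) (hc : c ≠ 0) (hξ : Differentiable ℝ ξ)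
    (hμ : EqOn μ (fun t => ξ (c * t + d)) (Icc a b))
    (hν : EqOn ν (fun t => ζ (c * t + d)) (Icc a b)) :
    ∫ t in a..b, B (deriv μ t) (ν t) = ∫ u in c * a + d..c * b + d, B (deriv ξ u) (ζ u) := by
  have hintegrand : ∫ t in a..b, B (deriv μ t) (ν t)
      = ∫ t in a..b, c * B (deriv ξ (c * t + d)) (ζ (c * t + d)) := by
    rw [intervalIntegral.integral_of_le hab, intervalIntegral.integral_of_le hab,
      integral_Ioc_eq_integral_Ioo, integral_Ioc_eq_integral_Ioo]
    refine setIntegral_congr_fun measurableSet_Ioo fun t ht => ?_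
    rw [deriv_eq_smul_deriv_of_eqOn_comp_affine (hξ _) hμ ht, hν (Ioo_subset_Icc_self ht),
      map_smul, LinearMap.smul_apply, smul_eq_mul]
  rw [hintegrand, intervalIntegral.integral_const_mul,
    intervalIntegral.integral_comp_mul_add (fun u => B (deriv ξ u) (ζ u)) hc d, smul_eq_mul,
    mul_inv_cancel_left₀ hc]

theorem integral_deriv_concat [FiniteDimensional ℝ E] [FiniteDimensional ℝ F]
    (B : E →ₗ[ℝ] F →ₗ[ℝ] ℝ) {ξ' ξ'' μξ : ℝ → E} {ζ' ζ'' μζ : ℝ → F}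
    (hξ' : Differentiable ℝ ξ') (hξ'' : Differentiable ℝ ξ'')
    (hμξ : ContDiff ℝ 1 μξ) (hμζ : Continuous μζ)
    (hμξ_left : ∀ t ∈ Icc (0 : ℝ) (1/2), μξ t = ξ' (2 * t))
    (hμζ_left : ∀ t ∈ Icc (0 : ℝ) (1/2), μζ t = ζ' (2 * t))
    (hμξ_right : ∀ t ∈ Icc (1/2 : ℝ) 1, μξ t = ξ'' (2 * t - 1))
    (hμζ_right : ∀ t ∈ Icc (1/2 : ℝ) 1, μζ t = ζ'' (2 * t - 1)) :
    ∫ t in (0:ℝ)..1, B (deriv μξ t) (μζ t)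
      = (∫ t in (0:ℝ)..1, B (deriv ξ'' t) (ζ'' t)) + ∫ t in (0:ℝ)..1, B (deriv ξ' t) (ζ' t) := by
  have hcont : Continuous fun t => B (deriv μξ t) (μζ t) :=
    (B.toContinuousBilinearMap.continuous.comp (hμξ.continuous_deriv le_rfl)).clm_apply hμζ
  have hleft := integral_deriv_comp_affine B (a := 0) (b := 1/2) (d := 0) (by norm_num)
    two_ne_zero hξ' (fun t ht => by simpa using hμξ_left t ht)
    (fun t ht => by simpa using hμζ_left t ht)
  have hright := integral_deriv_comp_affine B (a := 1/2) (b := 1) (d := -1) (by norm_num)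
    two_ne_zero hξ'' (fun t ht => by simpa [sub_eq_add_neg] using hμξ_right t ht)
    (fun t ht => by simpa [sub_eq_add_neg] using hμζ_right t ht)
  norm_num at hleft hright
  rw [← intervalIntegral.integral_add_adjacent_intervals (b := 1/2)
    (hcont.intervalIntegrable _ _) (hcont.intervalIntegrable _ _), hleft, hright, add_comm]

end Concatenation

theorem varpi_fusion_general
    {𝔤 : Type*} [NormedAddCommGroup 𝔤] [NormedSpace ℝ 𝔤] [FiniteDimensional ℝ 𝔤]
    (B : 𝔤 →ₗ[ℝ] 𝔤 →ₗ[ℝ] ℝ)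
    (B_symm : ∀ x y : 𝔤, B x y = B y x)
    (φ' φ'' : 𝔤 ≃ₗ[ℝ] 𝔤)
    (hφ''B : ∀ x y : 𝔤, B (φ'' x) (φ'' y) = B x y)
    (ξ' ζ' ξ'' ζ'' : ℝ → 𝔤) (vξ' vζ' vξ'' vζ'' : 𝔤)
    (hξ' : AtiyahFiber ⇑φ' ξ' vξ')
    (hξ'' : AtiyahFiber ⇑φ'' ξ'' vξ'')
    (hmatchξ : ξ' 1 = ξ'' 0)
    (μξ μζ : ℝ → 𝔤)
    (hμξ_smooth : ContDiff ℝ (⊤ : ℕ∞) μξ) (hμζ_smooth : ContDiff ℝ (⊤ : ℕ∞) μζ)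
    (hμξ_left : ∀ t ∈ Set.Icc (0 : ℝ) (1/2), μξ t = ξ' (2 * t))
    (hμζ_left : ∀ t ∈ Set.Icc (0 : ℝ) (1/2), μζ t = ζ' (2 * t))
    (hμξ_right : ∀ t ∈ Set.Icc (1/2 : ℝ) 1, μξ t = ξ'' (2 * t - 1))
    (hμζ_right : ∀ t ∈ Set.Icc (1/2 : ℝ) 1, μζ t = ζ'' (2 * t - 1)) :
    varpi B (fun x => φ'' (φ' x)) μξ μζ (φ'' vξ' + vξ'') (φ'' vζ' + vζ'')
      = varpi B ⇑φ'' ξ'' ζ'' vξ'' vζ'' + varpi B ⇑φ' ξ' ζ' vξ' vζ'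
        + (1/2 : ℝ) * (B (φ'' vξ') vζ'' - B (φ'' vζ') vξ'') := by
  have hintegral := integral_deriv_concat B (hξ'.1.differentiable (by simp))
    (hξ''.1.differentiable (by simp)) (hμξ_smooth.of_le (by simp)) hμζ_smooth.continuous
    hμξ_left hμζ_left hμξ_right hμζ_right
  have hμξ0 : μξ 0 = ξ' 0 := by simpa using hμξ_left 0 (by norm_num)
  have hξ''0 : ξ'' 0 = φ' (ξ' 0) + vξ' := by simpa [hmatchξ] using hξ'.2 0
  simp only [varpi, hintegral, hμξ0, hξ''0, map_add, LinearMap.add_apply]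
  linear_combination (-1 : ℝ) * hφ''B (φ' (ξ' 0)) vζ' - (1/2 : ℝ) * hφ''B vξ' vζ'
    + (1/2 : ℝ) * B_symm (φ'' vζ') vξ''

/-- fusion: for concatenations `μ_ξ = ξ'' * ξ'` and `μ_ζ = ζ'' * ζ'`,
`ϖ_{φ''∘φ'}(μ_ξ, μ_ζ) = ϖ_{φ''}(ξ'', ζ'') + ϖ_{φ'}(ξ', ζ')`
`+ (1/2)(B(φ''(v_{ξ'}), v_{ζ''}) - B(φ''(v_{ζ'}), v_{ξ''}))`. -/
theorem varpi_fusion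
    {𝔤 : Type*} [NormedAddCommGroup 𝔤] [NormedSpace ℝ 𝔤] [FiniteDimensional ℝ 𝔤]
    (br : 𝔤 →ₗ[ℝ] 𝔤 →ₗ[ℝ] 𝔤)
    (br_alt : ∀ x : 𝔤, br x x = 0)
    (br_jacobi : ∀ x y z : 𝔤, br (br x y) z + br (br y z) x + br (br z x) y = 0)
    (B : 𝔤 →ₗ[ℝ] 𝔤 →ₗ[ℝ] ℝ)
    (B_symm : ∀ x y : 𝔤, B x y = B y x)
    (B_inv : ∀ x y z : 𝔤, B (br x y) z = B x (br y z))
    (φ' φ'' : 𝔤 ≃ₗ[ℝ] 𝔤)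
    (hφ'B : ∀ x y : 𝔤, B (φ' x) (φ' y) = B x y)
    (hφ''B : ∀ x y : 𝔤, B (φ'' x) (φ'' y) = B x y)
    (ξ' ζ' ξ'' ζ'' : ℝ → 𝔤) (vξ' vζ' vξ'' vζ'' : 𝔤)
    (hξ' : AtiyahFiber ⇑φ' ξ' vξ') (hζ' : AtiyahFiber ⇑φ' ζ' vζ')
    (hξ'' : AtiyahFiber ⇑φ'' ξ'' vξ'') (hζ'' : AtiyahFiber ⇑φ'' ζ'' vζ'')
    (hmatchξ : ξ' 1 = ξ'' 0) (hmatchζ : ζ' 1 = ζ'' 0)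
    (μξ μζ : ℝ → 𝔤)
    (hμξ_smooth : ContDiff ℝ (⊤ : ℕ∞) μξ) (hμζ_smooth : ContDiff ℝ (⊤ : ℕ∞) μζ)
    (hμξ_left : ∀ t ∈ Set.Icc (0 : ℝ) (1/2), μξ t = ξ' (2 * t))
    (hμζ_left : ∀ t ∈ Set.Icc (0 : ℝ) (1/2), μζ t = ζ' (2 * t))
    (hμξ_right : ∀ t ∈ Set.Icc (1/2 : ℝ) 1, μξ t = ξ'' (2 * t - 1))
    (hμζ_right : ∀ t ∈ Set.Icc (1/2 : ℝ) 1, μζ t = ζ'' (2 * t - 1))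
    (hμξ_per : ∀ t : ℝ, μξ (t + 1) = φ'' (φ' (μξ t)) + (φ'' vξ' + vξ''))
    (hμζ_per : ∀ t : ℝ, μζ (t + 1) = φ'' (φ' (μζ t)) + (φ'' vζ' + vζ'')) :
    varpi B (fun x => φ'' (φ' x)) μξ μζ (φ'' vξ' + vξ'') (φ'' vζ' + vζ'')
      = varpi B ⇑φ'' ξ'' ζ'' vξ'' vζ'' + varpi B ⇑φ' ξ' ζ' vξ' vζ'
        + (1/2 : ℝ) * (B (φ'' vξ') vζ'' - B (φ'' vζ') vξ'') :=
  varpi_fusion_general B B_symm φ' φ'' hφ''B ξ' ζ' ξ'' ζ'' vξ' vζ' vξ'' vζ'' hξ' hξ'' hmatchξ μξ μζ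
    hμξ_smooth hμζ_smooth hμξ_left hμζ_left hμξ_right hμζ_right
end
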